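/- arXiv:1302.6084 — 3 statements merged into one kernel-verified Lean document; each statement's English description precedes it below -/
import Mathlib

section
/- Let m be even. A symmetric tensor A of order m and dimension n is strictly copositive if and only if there exists a real number γ ≥ 0 such that A x^m + γ ‖x⁺‖^m > 0 for all x ∈ ℝ^n \ {0}, where x⁺ is the componentwise positive part of x. -/
/-!
The converse is immediate from evaluating at `-x` for `x ≥ 0`. For the forward direction,
`A x^m + γ ‖x⁺‖^m` is positively homogeneous of degree `m`, so only the unit sphere matters.
Where `x⁺ = 0` on the sphere, i.e. `x ≤ 0`, evenness of `m` gives `A x^m = A (-x)^m > 0`.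
Hence the open sets `{x | 0 < A x^m + k ‖x⁺‖^m}`, increasing in `k : ℕ`, cover the compact
sphere, and one of them already contains it.
-/

open Finset

/-- `A x^m` for an `m`-order `n`-dimensional tensor `A`. -/
noncomputable def tpow {m n : ℕ} (A : (Fin m → Fin n) → ℝ) (x : Fin n → ℝ) : ℝ :=
  ∑ f : Fin m → Fin n, A f * ∏ k, x (f k)

/-- `A` is symmetric: entries invariant under permutations of indices. -/
def SymT {m n : ℕ} (A : (Fin m → Fin n) → ℝ) : Prop :=
  ∀ (σ : Equiv.Perm (Fin m)) (f : Fin m → Fin n), A (f ∘ σ) = A f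

/-- `A` is copositive. -/
def CoposT {m n : ℕ} (A : (Fin m → Fin n) → ℝ) : Prop :=
  ∀ x : Fin n → ℝ, (∀ i, 0 ≤ x i) → 0 ≤ tpow A x

/-- `A` is strictly copositive. -/
def StrictCoposT {m n : ℕ} (A : (Fin m → Fin n) → ℝ) : Prop :=
  ∀ x : Fin n → ℝ, (∀ i, 0 ≤ x i) → x ≠ 0 → 0 < tpow A x

theorem IsCompact.exists_pos_add_mul_of_pos_of_eq_zero {X : Type*} [TopologicalSpace X]
    {s : Set X} (hs : IsCompact s) {f g : X → ℝ} (hf : Continuous f) (hg : Continuous g)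
    (hg0 : ∀ x, 0 ≤ g x) (hfg : ∀ x ∈ s, g x = 0 → 0 < f x) :
    ∃ γ : ℝ, 0 ≤ γ ∧ ∀ x ∈ s, 0 < f x + γ * g x := by
  set U : ℕ → Set X := fun k => {x | 0 < f x + k * g x}
  have hU_open : ∀ k, IsOpen (U k) := fun k => isOpen_lt continuous_const (by fun_prop)
  have hU_mono : Monotone U := fun k l hkl x (hx : 0 < f x + k * g x) => by
    have : (k : ℝ) ≤ l := by exact_mod_cast hkl
    show 0 < f x + l * g x
    nlinarith [hg0 x]
  have hU_cover : s ⊆ ⋃ k, U k := by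
    intro x hx
    rcases (hg0 x).eq_or_lt with h | h
    · refine Set.mem_iUnion.2 ⟨0, show 0 < f x + (0 : ℕ) * g x from ?_⟩
      simpa using hfg x hx h.symm
    · obtain ⟨k, hk⟩ := exists_nat_gt (-f x / g x)
      refine Set.mem_iUnion.2 ⟨k, show 0 < f x + k * g x from ?_⟩
      linarith [(div_lt_iff₀ h).1 hk]
  obtain ⟨k, hk⟩ := hs.elim_directed_cover U hU_open hU_cover hU_mono.directed_le
  exact ⟨k, k.cast_nonneg, hk⟩

theorem pos_of_pos_on_sphere_of_smul {E : Type*} [NormedAddCommGroup E] [NormedSpace ℝ E]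
    {m : ℕ} {F : E → ℝ} (hF : ∀ c : ℝ, 0 < c → ∀ x, F (c • x) = c ^ m * F x)
    (hS : ∀ x ∈ Metric.sphere (0 : E) 1, 0 < F x) {x : E} (hx : x ≠ 0) : 0 < F x := by
  have hx' : 0 < ‖x‖ := norm_pos_iff.2 hx
  have hunit : ‖x‖⁻¹ • x ∈ Metric.sphere (0 : E) 1 := by
    rw [mem_sphere_zero_iff_norm, norm_smul, norm_inv, norm_norm, inv_mul_cancel₀ hx'.ne']
  have := hF ‖x‖ hx' (‖x‖⁻¹ • x)
  rw [smul_inv_smul₀ hx'.ne'] at this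
  rw [this]
  exact mul_pos (pow_pos hx' m) (hS _ hunit)

theorem Pi.posPart_smul_of_nonneg {ι : Type*} {c : ℝ} (hc : 0 ≤ c) (x : ι → ℝ) :
    (c • x)⁺ = c • x⁺ := by
  funext i
  show max (c * x i) 0 = c * max (x i) 0
  rw [mul_max_of_nonneg _ _ hc, mul_zero]

theorem Pi.continuous_posPart {ι : Type*} :
    Continuous (posPart : (ι → ℝ) → ι → ℝ) :=
  continuous_pi fun i => (continuous_apply i).max continuous_const

section Tensor

variable {m n : ℕ} (A : (Fin m → Fin n) → ℝ)

theorem tpow_smul (c : ℝ) (x : Fin n → ℝ) : tpow A (c • x) = c ^ m * tpow A x := by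
  simp only [tpow, Pi.smul_apply, smul_eq_mul, prod_mul_distrib, prod_const, card_univ,
    Fintype.card_fin, mul_sum]
  exact sum_congr rfl fun _ _ => by ring

theorem tpow_neg (hme : Even m) (x : Fin n → ℝ) : tpow A (-x) = tpow A x := by
  rw [← neg_one_smul ℝ x, tpow_smul, hme.neg_one_pow, one_mul]

theorem continuous_tpow : Continuous (tpow A) := by
  unfold tpow
  fun_prop

end Tensor

theorem stmt4_general {m n : ℕ} (hm : 0 < m) (hme : Even m) (A : (Fin m → Fin n) → ℝ) :
    StrictCoposT A ↔
      ∃ γ : ℝ, 0 ≤ γ ∧ ∀ x : Fin n → ℝ, x ≠ 0 →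
        0 < tpow A x + γ * ‖(fun i => max (x i) 0 : Fin n → ℝ)‖ ^ m := by
  constructor
  · intro hA
    have hpos_nonpos :
        ∀ x ∈ Metric.sphere (0 : Fin n → ℝ) 1, ‖x⁺‖ ^ m = 0 → 0 < tpow A x := by
      intro x hx h0
      have hx_nonpos : x ≤ 0 :=
        posPart_eq_zero.1 (norm_eq_zero.1 ((pow_eq_zero_iff hm.ne').1 h0))
      rw [← tpow_neg A hme]
      exact hA (-x) (neg_nonneg.2 hx_nonpos)
        (neg_ne_zero.2 (ne_zero_of_mem_unit_sphere ⟨x, hx⟩))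
    obtain ⟨γ, hγ, hsphere⟩ :=
      (isCompact_sphere (0 : Fin n → ℝ) 1).exists_pos_add_mul_of_pos_of_eq_zero
        (g := fun x => ‖x⁺‖ ^ m) (continuous_tpow A) (Pi.continuous_posPart.norm.pow m)
        (fun x => pow_nonneg (norm_nonneg _) m) hpos_nonpos
    refine ⟨γ, hγ, fun x hx =>
      pos_of_pos_on_sphere_of_smul (m := m) (fun c hc y => ?_) hsphere hx⟩
    rw [tpow_smul, Pi.posPart_smul_of_nonneg hc.le, norm_smul, Real.norm_of_nonneg hc.le]
    ring
  · rintro ⟨γ, -, h⟩ x hx hx0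
    have : 0 < tpow A (-x) + γ * ‖(-x)⁺‖ ^ m := h (-x) (neg_ne_zero.2 hx0)
    rwa [posPart_neg, negPart_eq_zero.2 (show 0 ≤ x from hx), norm_zero, zero_pow hm.ne',
      mul_zero, add_zero, tpow_neg A hme] at this

theorem stmt4 {m n : ℕ} (hm : 0 < m) (hme : Even m) (A : (Fin m → Fin n) → ℝ)
    (hA : SymT A) :
    StrictCoposT A ↔
      ∃ γ : ℝ, 0 ≤ γ ∧ ∀ x : Fin n → ℝ, x ≠ 0 →
        0 < tpow A x + γ * ‖(fun i => max (x i) 0 : Fin n → ℝ)‖ ^ m :=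
  stmt4_general hm hme A
end

section
/- Let A be a copositive symmetric tensor of order 3 and dimension 3 with a_{111} = a_{222} = a_{333} = 1. Then a_{112} + a_{221} ≥ −2/3, a_{113} + a_{331} ≥ −2/3, a_{223} + a_{332} ≥ −2/3, and 2 a_{123} + a_{112} + a_{113} + a_{221} + a_{223} + a_{331} + a_{332} ≥ −1. -/
open Finset

/-! Copositivity is used at `(1, 1, 0)`, its permutations, and `(1, 1, 1)`. By symmetry the cubic
form takes there the values `a₁₁₁ + a₂₂₂ + 3 (a₁₁₂ + a₂₂₁)` and
`3 + 3 (a₁₁₂ + a₁₁₃ + a₂₂₁ + a₂₂₃ + a₃₃₁ + a₃₃₂) + 6 a₁₂₃`. -/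

lemma tpow_fin_three {n : ℕ} (A : (Fin 3 → Fin n) → ℝ) (x : Fin n → ℝ) :
    tpow A x = ∑ i, ∑ j, ∑ k, A ![i, j, k] * (x i * x j * x k) := by
  have hnil : (default : Fin 0 → Fin n) = ![] := Subsingleton.elim _ _
  simp [tpow, ← (Fin.consEquiv fun _ => Fin n).sum_comp, Fintype.sum_prod_type,
    Fin.prod_univ_three, mul_assoc, Fin.consEquiv, hnil]

namespace SymT

variable {n : ℕ} {A : (Fin 3 → Fin n) → ℝ}

lemma apply_swap_01 (hA : SymT A) (i j k : Fin n) : A ![j, i, k] = A ![i, j, k] := by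
  convert hA (Equiv.swap 0 1) ![i, j, k] using 2
  ext l; fin_cases l <;> rfl

lemma apply_swap_12 (hA : SymT A) (i j k : Fin n) : A ![i, k, j] = A ![i, j, k] := by
  convert hA (Equiv.swap 1 2) ![i, j, k] using 2
  ext l; fin_cases l <;> rfl

lemma apply_swap_02 (hA : SymT A) (i j k : Fin n) : A ![k, j, i] = A ![i, j, k] := by
  convert hA (Equiv.swap 0 2) ![i, j, k] using 2
  ext l; fin_cases l <;> rfl

end SymT

lemma SymT.tpow_eq_cubic {A : (Fin 3 → Fin 3) → ℝ} (hA : SymT A) (a b c : ℝ) :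
    tpow A ![a, b, c] =
      A ![0, 0, 0] * a ^ 3 + A ![1, 1, 1] * b ^ 3 + A ![2, 2, 2] * c ^ 3 +
      3 * (A ![0, 0, 1] * a ^ 2 * b + A ![1, 1, 0] * b ^ 2 * a +
        A ![0, 0, 2] * a ^ 2 * c + A ![2, 2, 0] * c ^ 2 * a +
        A ![1, 1, 2] * b ^ 2 * c + A ![2, 2, 1] * c ^ 2 * b) +
      6 * A ![0, 1, 2] * a * b * c := by
  simp only [tpow_fin_three, Fin.sum_univ_three, Fin.isValue, Matrix.cons_val]
  -- sort every index triple; `120` and `201` pass through `210` before it becomes `012`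
  rw [hA.apply_swap_12 0 0 1, hA.apply_swap_02 0 0 1, hA.apply_swap_12 1 1 0, hA.apply_swap_02 1 1 0,
    hA.apply_swap_12 0 0 2, hA.apply_swap_02 0 0 2, hA.apply_swap_12 2 2 0, hA.apply_swap_02 2 2 0,
    hA.apply_swap_12 1 1 2, hA.apply_swap_02 1 1 2, hA.apply_swap_12 2 2 1, hA.apply_swap_02 2 2 1,
    hA.apply_swap_12 0 1 2, hA.apply_swap_01 0 1 2, hA.apply_swap_01 2 1 0, hA.apply_swap_12 2 1 0,
    hA.apply_swap_02 0 1 2]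
  ring

theorem stmt17 (A : (Fin 3 → Fin 3) → ℝ) (hA : SymT A) (hc : CoposT A)
    (h1 : A ![0, 0, 0] = 1) (h2 : A ![1, 1, 1] = 1) (h3 : A ![2, 2, 2] = 1) :
    A ![0, 0, 1] + A ![1, 1, 0] ≥ -(2 / 3) ∧
    A ![0, 0, 2] + A ![2, 2, 0] ≥ -(2 / 3) ∧
    A ![1, 1, 2] + A ![2, 2, 1] ≥ -(2 / 3) ∧
    2 * A ![0, 1, 2] + A ![0, 0, 1] + A ![0, 0, 2] + A ![1, 1, 0] +
      A ![1, 1, 2] + A ![2, 2, 0] + A ![2, 2, 1] ≥ -1 := by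
  have cubic_nonneg (a b c : ℝ) (ha : 0 ≤ a) (hb : 0 ≤ b) (hc₀ : 0 ≤ c) :=
    hA.tpow_eq_cubic a b c ▸ hc ![a, b, c] (by intro i; fin_cases i <;> assumption)
  have h01 := cubic_nonneg 1 1 0 zero_le_one zero_le_one le_rfl
  have h02 := cubic_nonneg 1 0 1 zero_le_one le_rfl zero_le_one
  have h12 := cubic_nonneg 0 1 1 le_rfl zero_le_one zero_le_one
  have h012 := cubic_nonneg 1 1 1 zero_le_one zero_le_one zero_le_one
  norm_num [h1, h2, h3] at h01 h02 h12 h012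
  exact ⟨by linarith, by linarith, by linarith, by linarith⟩
end

section
/- Let A be a symmetric tensor of order m and dimension n. If A is copositive, then every Z^{++}-eigenvalue of every principal sub-tensor of A is nonnegative; if A is strictly copositive, then every Z^{++}-eigenvalue of every principal sub-tensor of A is positive. -/
open Finset

/-- `(A_S x^{m-1})_i` : the `i`-th component of the contraction of the principal
sub-tensor of `A` on the index set `S` with `x` taken `m-1` times. -/
noncomputable def tcontr {m n : ℕ} (hm : 0 < m) (A : (Fin m → Fin n) → ℝ)
    (S : Finset (Fin n)) (x : Fin n → ℝ) (i : Fin n) : ℝ :=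
  ∑ f ∈ Finset.univ.filter
      (fun f : Fin m → Fin n => f ⟨0, hm⟩ = i ∧ ∀ k, f k ∈ S),
    A f * ∏ k ∈ Finset.univ.erase (⟨0, hm⟩ : Fin m), x (f k)

lemma tpow_restrict {m n : ℕ} (hm : 0 < m) (A : (Fin m → Fin n) → ℝ)
    (S : Finset (Fin n)) (v : Fin n → ℝ) :
    tpow A (fun j => if j ∈ S then v j else 0) = ∑ i ∈ S, v i * tcontr hm A S v i := by
  classical
  unfold tpow tcontr
  rw [← Finset.sum_filter_add_sum_filter_not Finset.univ
      (fun f : Fin m → Fin n => ∀ k, f k ∈ S)]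
  have h2 : ∑ f ∈ Finset.univ.filter (fun f : Fin m → Fin n => ¬ ∀ k, f k ∈ S),
      A f * ∏ k, (if f k ∈ S then v (f k) else 0) = 0 := by
    apply Finset.sum_eq_zero
    intro f hf
    simp only [Finset.mem_filter, not_forall] at hf
    obtain ⟨k, hk⟩ := hf.2
    rw [Finset.prod_eq_zero (Finset.mem_univ k) (by simp [hk])]
    ring
  rw [h2, add_zero,
    ← Finset.sum_fiberwise_of_maps_to (g := fun f : Fin m → Fin n => f ⟨0, hm⟩)
      (t := S) (fun f hf => by simp only [Finset.mem_filter] at hf; exact hf.2 _)]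
  apply Finset.sum_congr rfl
  intro i hi
  rw [Finset.mul_sum, Finset.filter_filter]
  apply Finset.sum_congr
  · apply Finset.filter_congr; intro f _; constructor <;> (intro h; exact ⟨h.2, h.1⟩)
  · intro f hf
    simp only [Finset.mem_filter, Finset.mem_univ, true_and] at hf
    obtain ⟨hfz, hall⟩ := hf
    rw [← Finset.mul_prod_erase Finset.univ _ (Finset.mem_univ (⟨0, hm⟩ : Fin m))]
    simp only [hfz, hall, hi, if_true]
    ring

lemma lam_eq {m n : ℕ} (hm : 0 < m) (A : (Fin m → Fin n) → ℝ)
    (S : Finset (Fin n)) (lam : ℝ) (v : Fin n → ℝ)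
    (hnorm : ∑ i ∈ S, v i ^ 2 = 1)
    (heig : ∀ i ∈ S, tcontr hm A S v i = lam * v i) :
    tpow A (fun j => if j ∈ S then v j else 0) = lam := by
  rw [tpow_restrict hm A S v]
  calc ∑ i ∈ S, v i * tcontr hm A S v i = ∑ i ∈ S, lam * v i ^ 2 := by
        apply Finset.sum_congr rfl; intro i hi; rw [heig i hi]; ring
    _ = lam := by rw [← Finset.mul_sum, hnorm, mul_one]

theorem stmt19 {m n : ℕ} (hm : 0 < m) (A : (Fin m → Fin n) → ℝ) (hA : SymT A) :
    (CoposT A →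
      ∀ (S : Finset (Fin n)) (lam : ℝ) (v : Fin n → ℝ),
        S.Nonempty → (∀ i ∈ S, 0 < v i) → (∑ i ∈ S, v i ^ 2 = 1) →
        (∀ i ∈ S, tcontr hm A S v i = lam * v i) → 0 ≤ lam) ∧
    (StrictCoposT A →
      ∀ (S : Finset (Fin n)) (lam : ℝ) (v : Fin n → ℝ),
        S.Nonempty → (∀ i ∈ S, 0 < v i) → (∑ i ∈ S, v i ^ 2 = 1) →
        (∀ i ∈ S, tcontr hm A S v i = lam * v i) → 0 < lam) := by
  classical
  constructor
  · intro hC S lam v _ hv hnorm heig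
    have hy : ∀ j, 0 ≤ (if j ∈ S then v j else 0) := by
      intro j; split
      · exact le_of_lt (hv j (by assumption))
      · exact le_refl 0
    rw [← lam_eq hm A S lam v hnorm heig]
    exact hC _ hy
  · intro hC S lam v hS hv hnorm heig
    have hy : ∀ j, 0 ≤ (if j ∈ S then v j else 0) := by
      intro j; split
      · exact le_of_lt (hv j (by assumption))
      · exact le_refl 0
    obtain ⟨i0, hi0⟩ := hS
    have hne : (fun j => if j ∈ S then v j else 0) ≠ 0 := by
      intro h
      have := congrFun h i0
      simp only [if_pos hi0, Pi.zero_apply] at this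
      exact absurd this (ne_of_gt (hv i0 hi0))
    rw [← lam_eq hm A S lam v hnorm heig]
    exact hC _ hy hne
end
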